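/- For the nrDFAwtl A_ex3 defined in the context, {ab(cacabb)ⁿc : n ≥ 0} ⊆ L(A_ex3), i.e., every word of the form ab(cacabb)ⁿc is accepted by A_ex3. -/

import Mathlib

/-- The end-of-tape behaviour of a non-returning automaton with translucent
letters: either a set of states to continue with (the empty set meaning that
the transition is undefined), or the operation `Accept`. -/
inductive EndMove (Q : Type) where
  | cont : Set Q → EndMove Q
  | accept : EndMove Q

/-- A nondeterministic finite automaton with translucent letters (NFAwtl).
`τ q` is the set of letters that are translucent for state `q`. -/
structure NFAwtl (Q : Type) (A : Type) where
  τ : Q → Set A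
  I : Set Q
  F : Set Q
  δ : Q → A → Set Q
  tr_compat : ∀ q a, a ∈ τ q → δ q a = ∅

namespace NFAwtl

variable {Q A : Type}

/-- A single computation step of an NFAwtl: the first letter (from the left)
that is not translucent for the current state is read and deleted. -/
inductive Step (M : NFAwtl Q A) : Q × List A → Q × List A → Prop
  | read (q q' : Q) (u v : List A) (a : A) :
      (∀ b ∈ u, b ∈ M.τ q) → a ∉ M.τ q → q' ∈ M.δ q a →
      Step M (q, u ++ a :: v) (q', u ++ v)

/-- The language accepted by an NFAwtl: words from which some computation
reaches a configuration whose remaining tape contents is translucent for a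
final state. -/
def lang (M : NFAwtl Q A) : Set (List A) :=
  { w | ∃ q₀ ∈ M.I, ∃ q w', Relation.ReflTransGen (Step M) (q₀, w) (q, w') ∧
        (∀ b ∈ w', b ∈ M.τ q) ∧ q ∈ M.F }

/-- An NFAwtl is deterministic (a DFAwtl) if it has a single initial state and
at most one transition for each state/letter pair. -/
def IsDet (M : NFAwtl Q A) : Prop :=
  (∃ q, M.I = {q}) ∧ ∀ q a, (M.δ q a).Subsingleton

end NFAwtl

/-- A configuration of a non-returning automaton with translucent letters:
`conf x q w` means the tape contains `x ++ w` followed by the end-of-tape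
marker, the current state is `q`, and the head is positioned at the first
letter of `w`; `accept` is the accepting halting configuration. -/
inductive NrConf (Q : Type) (A : Type) where
  | conf : List A → Q → List A → NrConf Q A
  | accept : NrConf Q A

/-- A non-returning nondeterministic finite automaton with translucent
letters (nrNFAwtl). -/
structure NrNFAwtl (Q : Type) (A : Type) where
  τ : Q → Set A
  I : Set Q
  δ : Q → A → Set Q
  δend : Q → EndMove Q
  tr_compat : ∀ q a, a ∈ τ q → δ q a = ∅

namespace NrNFAwtl

variable {Q A : Type}

/-- A single computation step of an nrNFAwtl. -/
inductive Step (M : NrNFAwtl Q A) : NrConf Q A → NrConf Q A → Prop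
  | read (x : List A) (q q' : Q) (u v : List A) (a : A) :
      (∀ b ∈ u, b ∈ M.τ q) → a ∉ M.τ q → q' ∈ M.δ q a →
      Step M (.conf x q (u ++ a :: v)) (.conf (x ++ u) q' v)
  | restart (x w : List A) (q q' : Q) (S : Set Q) :
      (∀ b ∈ w, b ∈ M.τ q) → M.δend q = .cont S → q' ∈ S →
      Step M (.conf x q w) (.conf [] q' (x ++ w))
  | accept (x w : List A) (q : Q) :
      (∀ b ∈ w, b ∈ M.τ q) → M.δend q = .accept →
      Step M (.conf x q w) .accept

/-- The language accepted by an nrNFAwtl. -/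
def lang (M : NrNFAwtl Q A) : Set (List A) :=
  { w | ∃ q₀ ∈ M.I, Relation.ReflTransGen (Step M) (.conf [] q₀ w) .accept }

/-- An nrNFAwtl is deterministic (an nrDFAwtl) if it has a single initial
state and, for every state and every letter (including the end-of-tape
marker), at most one transition is available. -/
def IsDet (M : NrNFAwtl Q A) : Prop :=
  (∃ q, M.I = {q}) ∧ (∀ q a, (M.δ q a).Subsingleton) ∧
  (∀ q S, M.δend q = .cont S → S.Subsingleton)

end NrNFAwtl

/-- `L` is accepted by some NFAwtl. -/
def AcceptedByNFAwtl {A : Type} [Fintype A] (L : Set (List A)) : Prop :=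
  ∃ (Q : Type) (_ : Fintype Q) (M : NFAwtl Q A), M.lang = L

/-- `L` is accepted by some DFAwtl. -/
def AcceptedByDFAwtl {A : Type} [Fintype A] (L : Set (List A)) : Prop :=
  ∃ (Q : Type) (_ : Fintype Q) (M : NFAwtl Q A), M.IsDet ∧ M.lang = L

/-- `L` is accepted by some nrNFAwtl. -/
def AcceptedByNrNFAwtl {A : Type} [Fintype A] (L : Set (List A)) : Prop :=
  ∃ (Q : Type) (_ : Fintype Q) (M : NrNFAwtl Q A), M.lang = L

/-- `L` is accepted by some nrDFAwtl. -/
def AcceptedByNrDFAwtl {A : Type} [Fintype A] (L : Set (List A)) : Prop :=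
  ∃ (Q : Type) (_ : Fintype Q) (M : NrNFAwtl Q A), M.IsDet ∧ M.lang = L

/-- The three-letter alphabet `{a, b, c}`. -/
inductive Γ3 : Type
  | a | b | c
deriving DecidableEq

instance : Fintype Γ3 :=
  ⟨{Γ3.a, Γ3.b, Γ3.c}, fun x => by cases x <;> simp⟩

/-- The state set of the nrDFAwtl `A_ex3`. -/
inductive StEx3 : Type
  | q0 | q1 | q2 | q3 | q4 | q5 | q6 | q7 | q8
deriving DecidableEq

instance : Fintype StEx3 :=
  ⟨{StEx3.q0, StEx3.q1, StEx3.q2, StEx3.q3, StEx3.q4, StEx3.q5, StEx3.q6, StEx3.q7,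
    StEx3.q8}, fun x => by cases x <;> simp⟩

/-- The translucency mapping of `A_ex3`. -/
def τEx3 : StEx3 → Set Γ3
  | .q0 => {Γ3.a}
  | .q1 => ∅
  | .q2 => ∅
  | .q3 => {Γ3.b}
  | .q4 => ∅
  | .q5 => ∅
  | .q6 => {Γ3.a, Γ3.c}
  | .q7 => ∅
  | .q8 => ∅

/-- The letter transitions of `A_ex3`. -/
def δEx3 : StEx3 → Γ3 → Set StEx3
  | .q0, .b => {StEx3.q1}
  | .q1, .c => {StEx3.q2}
  | .q2, .a => {StEx3.q3}
  | .q3, .c => {StEx3.q4}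
  | .q4, .a => {StEx3.q5}
  | .q5, .b => {StEx3.q6}
  | .q6, .b => {StEx3.q1}
  | .q7, .a => {StEx3.q8}
  | _, _ => ∅

/-- The end-of-tape transitions of `A_ex3`. -/
def δendEx3 : StEx3 → EndMove StEx3
  | .q2 => .cont {StEx3.q7}
  | .q6 => .cont {StEx3.q0}
  | .q8 => .accept
  | _ => .cont ∅

/-- The nrDFAwtl `A_ex3` from Example 7 of the paper. -/
def Aex3 : NrNFAwtl StEx3 Γ3 where
  τ := τEx3
  I := {StEx3.q0}
  δ := δEx3
  δend := δendEx3
  tr_compat := by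
    intro q x h
    cases q <;> cases x <;> simp_all [τEx3, δEx3]

/-!
The leading `a` is translucent for `q0`, so `q0` reads the `b` and leaves the `a` on the tape.
From `q1` every block `cacabb` is read straight from the head back to `q1`, and the final `c`
leads to `q2`. Its end-of-tape move restarts in `q7` on the remaining tape `a`, which is read
into `q8`, and `q8` accepts.
-/

namespace NrNFAwtl

variable {Q A : Type} (M : NrNFAwtl Q A)

/-- `M.Reads q w q'`: starting in `q`, the automaton can read `w` letter by letter from
the head position, without skipping translucent letters, and end in `q'`. -/
inductive Reads : Q → List A → Q → Prop
  | nil (q : Q) : Reads q [] q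
  | cons {q q' q'' : Q} {a : A} {w : List A} :
      q' ∈ M.δ q a → Reads q' w q'' → Reads q (a :: w) q''

variable {M}

theorem not_mem_τ_of_mem_δ {q q' : Q} {a : A} (h : q' ∈ M.δ q a) : a ∉ M.τ q := by
  intro ha
  simp [M.tr_compat q a ha] at h

theorem Step.read_cons (x : List A) {q q' : Q} {a : A} (v : List A) (h : q' ∈ M.δ q a) :
    Step M (.conf x q (a :: v)) (.conf x q' v) := by
  simpa using Step.read x q q' [] v a (by simp) (not_mem_τ_of_mem_δ h) h

namespace Reads

theorem append {q₁ q₂ q₃ : Q} {w₁ w₂ : List A} (h₁ : M.Reads q₁ w₁ q₂)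
    (h₂ : M.Reads q₂ w₂ q₃) : M.Reads q₁ (w₁ ++ w₂) q₃ := by
  induction h₁ with
  | nil => exact h₂
  | cons hq _ ih => exact .cons hq (ih h₂)

theorem flatten_replicate {q : Q} {w : List A} (h : M.Reads q w q) (n : ℕ) :
    M.Reads q (List.replicate n w).flatten q := by
  induction n with
  | zero => exact .nil q
  | succ n ih => simpa [List.replicate_succ] using h.append ih

theorem reflTransGen {q q' : Q} {w : List A} (h : M.Reads q w q') (x v : List A) :
    Relation.ReflTransGen (Step M) (.conf x q (w ++ v)) (.conf x q' v) := by
  induction h with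
  | nil => exact .refl
  | cons hq _ ih => exact .head (Step.read_cons x _ hq) ih

end Reads

end NrNFAwtl

open Γ3 StEx3 NrNFAwtl

theorem Aex3_reads_cacabb_pow_c (n : ℕ) :
    Aex3.Reads q1 ((List.replicate n [c, a, c, a, b, b]).flatten ++ [c]) q2 := by
  have hloop : Aex3.Reads q1 [c, a, c, a, b, b] q1 :=
    .cons rfl (.cons rfl (.cons rfl (.cons rfl (.cons rfl (.cons rfl (.nil q1))))))
  exact (hloop.flatten_replicate n).append (.cons rfl (.nil q2))

/-- Every word of the form `ab(cacabb)ⁿc` is accepted by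
`A_ex3`. -/
theorem Aex3_accepts_ab_cacabb_pow_c (n : ℕ) :
    [Γ3.a, Γ3.b] ++
      (List.replicate n [Γ3.c, Γ3.a, Γ3.c, Γ3.a, Γ3.b, Γ3.b]).flatten ++
      [Γ3.c] ∈ Aex3.lang := by
  set w := (List.replicate n [c, a, c, a, b, b]).flatten ++ [c]
  have skip_a : Step Aex3 (.conf [] q0 ([a, b] ++ w)) (.conf [a] q1 w) :=
    Step.read [] q0 q1 [a] w b (by simp [Aex3, τEx3]) (by simp [Aex3, τEx3]) rfl
  have read_w : Relation.ReflTransGen (Step Aex3) (.conf [a] q1 w) (.conf [a] q2 []) := by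
    simpa using (Aex3_reads_cacabb_pow_c n).reflTransGen [a] []
  have restart : Step Aex3 (.conf [a] q2 []) (.conf [] q7 [a]) :=
    Step.restart [a] [] q2 q7 {q7} (by simp) rfl rfl
  refine ⟨q0, rfl, ?_⟩
  rw [List.append_assoc]
  exact .head skip_a <| read_w.trans <| .head restart <|
    .head (Step.read_cons [] [] rfl) <| .single (Step.accept [] [] q8 (by simp) rfl)
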